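/- Let ρ̃, σ̃, ρ₂, σ₂ ∈ ℝ and κ̃ ∈ ℝ \ {0}, and set R̃(t) = ρ̃t² + σ̃t + 1. Define Natanzon parameters a = ρ̃/κ̃, c₀ = 1/κ̃, c₁ = (1+ρ̃+σ̃)/κ̃, f = −ρ₂, h₀ = 0, h₁ = −(ρ₂+σ₂), and H(t) = at² + (c₁−c₀−a)t + c₀, Δ = (a−c₀−c₁)² − 4c₀c₁. Then H(t) = R̃(t)/κ̃ for all t, and for every real y with y ∉ {0,1} and R̃(y) ≠ 0: (y²(1−y)²/H(y)²)·[ a + (a+(c₁−c₀)(2y−1))/(y(y−1)) − (5/4)·Δ/H(y) ] + (f·y(y−1) + h₀(1−y) + h₁y + 1)/H(y) = (κ̃·y²(1−y)²/R̃(y))·[ 1/(y²(1−y)²) + 2ρ̃/R̃(y) + (1−2y)(2ρ̃y+σ̃)/(y(1−y)R̃(y)) − 5(2ρ̃y+σ̃)²/(4R̃(y)²) ] − κ̃·(ρ₂y² + σ₂y)/R̃(y). -/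

import Mathlib

/-- Natanzon's quadratic `H(t) = at² + (c₁−c₀−a)t + c₀`. -/
def natanzonH (a c₀ c₁ : ℝ) : ℝ → ℝ := fun t => a * t ^ 2 + (c₁ - c₀ - a) * t + c₀

/-- Iwata's second quadratic `R̃(t) = ρ̃t² + σ̃t + 1`. -/
def iwataR2 (ρt σt : ℝ) : ℝ → ℝ := fun t => ρt * t ^ 2 + σt * t + 1

/-! Under the substitution, Natanzon's `H` is `R̃ / κ̃` and his `Δ` is the discriminant
`σ̃² − 4ρ̃` of `R̃` divided by `κ̃²`. After these two rewrites both potentials are rational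
functions whose denominators are products of `y`, `1 − y`, `R̃(y)` and `κ̃`, and clearing
them leaves a polynomial identity. -/

theorem natanzonH_div_eq_iwataR2_div {ρ σ κ : ℝ} (hκ : κ ≠ 0) (t : ℝ) :
    natanzonH (ρ / κ) (1 / κ) ((1 + ρ + σ) / κ) t = iwataR2 ρ σ t / κ := by
  simp only [natanzonH, iwataR2]
  field_simp
  ring

theorem natanzon_discr_div {ρ σ κ : ℝ} (hκ : κ ≠ 0) :
    (ρ / κ - 1 / κ - (1 + ρ + σ) / κ) ^ 2 - 4 * (1 / κ) * ((1 + ρ + σ) / κ)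
      = (σ ^ 2 - 4 * ρ) / κ ^ 2 := by
  field_simp
  ring

theorem stmt_9 (ρt σt ρ₂ σ₂ κt : ℝ) (hκ : κt ≠ 0)
    (a c₀ c₁ f h₀ h₁ : ℝ)
    (ha : a = ρt / κt) (hc₀ : c₀ = 1 / κt) (hc₁ : c₁ = (1 + ρt + σt) / κt)
    (hf : f = -ρ₂) (hh₀ : h₀ = 0) (hh₁ : h₁ = -(ρ₂ + σ₂)) :
    (∀ t : ℝ, natanzonH a c₀ c₁ t = iwataR2 ρt σt t / κt) ∧
    ∀ y : ℝ, y ≠ 0 → y ≠ 1 → iwataR2 ρt σt y ≠ 0 →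
      (y ^ 2 * (1 - y) ^ 2 / (natanzonH a c₀ c₁ y) ^ 2) *
            (a + (a + (c₁ - c₀) * (2 * y - 1)) / (y * (y - 1))
              - (5 / 4) * ((a - c₀ - c₁) ^ 2 - 4 * c₀ * c₁) / natanzonH a c₀ c₁ y)
          + (f * y * (y - 1) + h₀ * (1 - y) + h₁ * y + 1) / natanzonH a c₀ c₁ y
        = (κt * y ^ 2 * (1 - y) ^ 2 / iwataR2 ρt σt y) *
            (1 / (y ^ 2 * (1 - y) ^ 2) + 2 * ρt / iwataR2 ρt σt y
              + (1 - 2 * y) * (2 * ρt * y + σt) / (y * (1 - y) * iwataR2 ρt σt y)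
              - 5 * (2 * ρt * y + σt) ^ 2 / (4 * (iwataR2 ρt σt y) ^ 2))
          - κt * (ρ₂ * y ^ 2 + σ₂ * y) / iwataR2 ρt σt y := by
  subst ha hc₀ hc₁ hf hh₀ hh₁
  refine ⟨natanzonH_div_eq_iwataR2_div hκ, fun y hy₀ hy₁ hR => ?_⟩
  rw [natanzonH_div_eq_iwataR2_div hκ, natanzon_discr_div hκ]
  field_simp
  simp only [iwataR2]
  ring
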